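/- arXiv:1505.07434 — 4 statements merged into one kernel-verified Lean document; each statement's English description precedes it below -/
import Mathlib

section
/- Augmentation property (core of Lemma 1): if π is a feasible allocation with Z(π) < Z_max, then there exist a feasible allocation π' and a company k0 such that Z(π') = Z(π) + 1, ω(π') k0 = ω(π) k0 + 1, and ω(π') k = ω(π) k for every company k ≠ k0. -/
/-- A feasible allocation: every assigned triple was bid on, every job is
assigned at most once, and capacities are respected. -/
def Feasible {J T K : Type*} [DecidableEq J] [DecidableEq T] [DecidableEq K]
    (b : J → T → K → Prop) (n : K → T → ℕ) (π : Finset (J × T × K)) : Prop :=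
  (∀ x ∈ π, b x.1 x.2.1 x.2.2) ∧
  (∀ j : J, (π.filter (fun x => x.1 = j)).card ≤ 1) ∧
  (∀ (k : K) (t : T), (π.filter (fun x => x.2.1 = t ∧ x.2.2 = k)).card ≤ n k t)

/-- Number of jobs a company `k` receives in allocation `π`. -/
def alloc {J T K : Type*} [DecidableEq K]
    (π : Finset (J × T × K)) (k : K) : ℕ :=
  (π.filter (fun x => x.2.2 = k)).card

/-- Total compensation of an allocation. -/
def cost {J T K : Type*} (c : J → T → K → ℕ) (π : Finset (J × T × K)) : ℕ :=
  ∑ x ∈ π, c x.1 x.2.1 x.2.2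

/-- The maximum number of allocatable jobs. -/
noncomputable def Zmax {J T K : Type*} [DecidableEq J] [DecidableEq T] [DecidableEq K]
    (b : J → T → K → Prop) (n : K → T → ℕ) : ℕ :=
  sSup {z | ∃ π : Finset (J × T × K), Feasible b n π ∧ π.card = z}

/-- The allocation vector of `π` sorted in nondecreasing order. -/
def sortedVec {J T K : Type*} [Fintype K] [DecidableEq K]
    (π : Finset (J × T × K)) : List ℕ :=
  Multiset.sort (Finset.univ.val.map (fun k => alloc π k)) (· ≤ ·)

/-- `π` is a max-lexmin fair maximum allocation. -/
noncomputable def MaxLexminFair {J T K : Type*} [Fintype K]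
    [DecidableEq J] [DecidableEq T] [DecidableEq K]
    (b : J → T → K → Prop) (n : K → T → ℕ) (π : Finset (J × T × K)) : Prop :=
  Feasible b n π ∧ π.card = Zmax b n ∧
    ∀ π' : Finset (J × T × K), Feasible b n π' → π'.card = Zmax b n →
      sortedVec π' = sortedVec π ∨ List.Lex (· < ·) (sortedVec π') (sortedVec π)

/-!
Take a feasible `σ` with more jobs than `π`. Since jobs are used at most once, some triple
`x₀ ∈ σ` carries a job that `π` leaves unassigned. If `π` has spare capacity in the slot
`(t, k)` of `x₀`, adding `x₀` augments `π`. Otherwise that slot is full in `π`, while `σ`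
respects the same capacity and contains `x₀`, so `π` has a triple `x₁` in the slot outside `σ`.
Exchanging `x₁` for `x₀` keeps `π` feasible with the same allocation vector and strictly
shrinks `σ \ π`, so we conclude by induction on `#(σ \ π)`.
-/

open Finset

theorem Finset.card_sdiff_insert_erase_lt {α : Type*} [DecidableEq α] {s t : Finset α} {a b : α}
    (has : a ∈ s) (hat : a ∉ t) (hbs : b ∉ s) : #(s \ insert a (t.erase b)) < #(s \ t) := by
  have hsub : s \ insert a (t.erase b) ⊆ s \ t := by
    intro x hx
    simp only [mem_sdiff, mem_insert, mem_erase, not_or, not_and'] at hx ⊢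
    exact ⟨hx.1, fun hxt => hx.2.2 hxt fun hxb => hbs (hxb ▸ hx.1)⟩
  refine card_lt_card ((ssubset_iff_of_subset hsub).2 ⟨a, mem_sdiff.2 ⟨has, hat⟩, ?_⟩)
  simp

section Allocation

variable {J T K : Type*} [DecidableEq J] [DecidableEq T] [DecidableEq K]
  {b : J → T → K → Prop} {n : K → T → ℕ} {π σ : Finset (J × T × K)} {x₀ x₁ : J × T × K}

theorem alloc_insert (hx : x₀ ∉ π) : alloc (insert x₀ π) = alloc π + Pi.single x₀.2.2 1 := by
  funext k
  by_cases hk : x₀.2.2 = k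
  · subst hk
    simp [alloc, filter_insert, hx]
  · simp [alloc, filter_insert, hk, Ne.symm hk]

theorem alloc_erase_add (hx : x₁ ∈ π) : alloc (π.erase x₁) + Pi.single x₁.2.2 1 = alloc π := by
  rw [← alloc_insert (notMem_erase x₁ π), insert_erase hx]

theorem alloc_exchange (hx₀ : x₀ ∉ π) (hx₁ : x₁ ∈ π) (hk : x₁.2.2 = x₀.2.2) :
    alloc (insert x₀ (π.erase x₁)) = alloc π := by
  rw [alloc_insert fun h => hx₀ (mem_of_mem_erase h), ← hk, alloc_erase_add hx₁]

theorem Feasible.subset {ρ : Finset (J × T × K)} (h : Feasible b n π) (hρ : ρ ⊆ π) :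
    Feasible b n ρ :=
  ⟨fun x hx => h.1 x (hρ hx),
    fun j => (card_le_card (filter_subset_filter _ hρ)).trans (h.2.1 j),
    fun k t => (card_le_card (filter_subset_filter _ hρ)).trans (h.2.2 k t)⟩

theorem Feasible.card_image_fst (h : Feasible b n π) : #(π.image Prod.fst) = #π :=
  card_image_of_injOn fun x hx y hy hxy =>
    card_le_one.1 (h.2.1 y.1) x (mem_filter.2 ⟨hx, hxy⟩) y (mem_filter.2 ⟨hy, rfl⟩)

theorem Feasible.insert_of_card_lt (h : Feasible b n π) (hb : b x₀.1 x₀.2.1 x₀.2.2)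
    (hjob : x₀.1 ∉ π.image Prod.fst)
    (hroom : #(π.filter fun y => y.2.1 = x₀.2.1 ∧ y.2.2 = x₀.2.2) < n x₀.2.2 x₀.2.1) :
    Feasible b n (insert x₀ π) := by
  refine ⟨forall_mem_insert _ _ _ |>.2 ⟨hb, h.1⟩, fun j => ?_, fun k t => ?_⟩
  · rw [filter_insert]
    split_ifs with hj
    · have hempty : π.filter (fun y => y.1 = j) = ∅ :=
        filter_eq_empty_iff.2 fun y hy hyj => hjob (mem_image.2 ⟨y, hy, hyj.trans hj.symm⟩)
      simp [hempty]
    · exact h.2.1 j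
  · rw [filter_insert]
    split_ifs with hslot
    · obtain ⟨rfl, rfl⟩ := hslot
      exact (card_insert_le _ _).trans hroom
    · exact h.2.2 k t

theorem Feasible.exchange (h : Feasible b n π) (hb : b x₀.1 x₀.2.1 x₀.2.2)
    (hjob : x₀.1 ∉ π.image Prod.fst) (hx₁ : x₁ ∈ π) (hslot : x₁.2 = x₀.2) :
    Feasible b n (insert x₀ (π.erase x₁)) := by
  refine (h.subset (erase_subset x₁ π)).insert_of_card_lt hb
    (fun hj => hjob (image_subset_image (erase_subset x₁ π) hj)) ?_
  set slot := π.filter fun y => y.2.1 = x₀.2.1 ∧ y.2.2 = x₀.2.2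
  have hx₁slot : x₁ ∈ slot := mem_filter.2 ⟨hx₁, by rw [hslot]; simp⟩
  rw [filter_erase, card_erase_of_mem hx₁slot]
  have hcap : #slot ≤ n x₀.2.2 x₀.2.1 := h.2.2 _ _
  have := card_pos.2 ⟨x₁, hx₁slot⟩
  omega

theorem Feasible.exists_mem_fst_notMem_image (hσ : Feasible b n σ) (hlt : #π < #σ) :
    ∃ x ∈ σ, x.1 ∉ π.image Prod.fst := by
  have : #(π.image Prod.fst) < #(σ.image Prod.fst) := by
    rw [hσ.card_image_fst]
    exact card_image_le.trans_lt hlt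
  obtain ⟨j, hjσ, hjπ⟩ := exists_mem_notMem_of_card_lt_card this
  obtain ⟨x, hx, rfl⟩ := mem_image.1 hjσ
  exact ⟨x, hx, hjπ⟩

theorem Feasible.exists_mem_slot_notMem (hσ : Feasible b n σ) (hx₀σ : x₀ ∈ σ) (hx₀π : x₀ ∉ π)
    (hfull : n x₀.2.2 x₀.2.1 ≤ #(π.filter fun y => y.2.1 = x₀.2.1 ∧ y.2.2 = x₀.2.2)) :
    ∃ x₁ ∈ π, x₁.2 = x₀.2 ∧ x₁ ∉ σ := by
  set p : J × T × K → Prop := fun y => y.2.1 = x₀.2.1 ∧ y.2.2 = x₀.2.2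
  have hx₀slot : x₀ ∈ σ.filter p := mem_filter.2 ⟨hx₀σ, rfl, rfl⟩
  have : #((σ.filter p).erase x₀) < #(π.filter p) := by
    rw [card_erase_of_mem hx₀slot]
    have hcap : #(σ.filter p) ≤ n x₀.2.2 x₀.2.1 := hσ.2.2 _ _
    have hfull : n x₀.2.2 x₀.2.1 ≤ #(π.filter p) := hfull
    have := card_pos.2 ⟨x₀, hx₀slot⟩
    omega
  obtain ⟨x₁, hx₁π, hx₁σ⟩ := exists_mem_notMem_of_card_lt_card this
  obtain ⟨hx₁π, hx₁p⟩ := mem_filter.1 hx₁π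
  have hne : x₁ ≠ x₀ := fun h => hx₀π (h ▸ hx₁π)
  exact ⟨x₁, hx₁π, Prod.ext hx₁p.1 hx₁p.2,
    fun h => hx₁σ (mem_erase.2 ⟨hne, mem_filter.2 ⟨h, hx₁p⟩⟩)⟩

theorem Feasible.exists_augment_of_card_lt (hσ : Feasible b n σ) (hπ : Feasible b n π)
    (hlt : #π < #σ) :
    ∃ (π' : Finset (J × T × K)) (k₀ : K), Feasible b n π' ∧ #π' = #π + 1 ∧
      alloc π' = alloc π + Pi.single k₀ 1 := by
  induction hd : #(σ \ π) using Nat.strong_induction_on generalizing π with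
  | _ d ih =>
  obtain ⟨x₀, hx₀σ, hjob⟩ := hσ.exists_mem_fst_notMem_image hlt
  have hx₀π : x₀ ∉ π := fun h => hjob (mem_image_of_mem _ h)
  by_cases hroom : #(π.filter fun y => y.2.1 = x₀.2.1 ∧ y.2.2 = x₀.2.2) < n x₀.2.2 x₀.2.1
  · exact ⟨insert x₀ π, x₀.2.2, hπ.insert_of_card_lt (hσ.1 x₀ hx₀σ) hjob hroom,
      card_insert_of_notMem hx₀π, alloc_insert hx₀π⟩
  obtain ⟨x₁, hx₁π, hslot, hx₁σ⟩ := hσ.exists_mem_slot_notMem hx₀σ hx₀π (not_lt.1 hroom)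
  have hcard : #(insert x₀ (π.erase x₁)) = #π := by
    rw [card_insert_of_notMem fun h => hx₀π (mem_of_mem_erase h), card_erase_add_one hx₁π]
  obtain ⟨π', k₀, hπ', hcard', halloc⟩ :=
    ih _ (hd ▸ card_sdiff_insert_erase_lt hx₀σ hx₀π hx₁σ)
      (hπ.exchange (hσ.1 x₀ hx₀σ) hjob hx₁π hslot) (hcard ▸ hlt) rfl
  refine ⟨π', k₀, hπ', hcard' ▸ hcard ▸ rfl, ?_⟩
  rw [halloc, alloc_exchange hx₀π hx₁π (congrArg Prod.snd hslot)]

end Allocation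

theorem feasible_augment_general {J T K : Type*}
    [DecidableEq J] [DecidableEq T] [DecidableEq K]
    (b : J → T → K → Prop) (n : K → T → ℕ) (π : Finset (J × T × K))
    (hfeas : Feasible b n π) (hlt : π.card < Zmax b n) :
    ∃ (π' : Finset (J × T × K)) (k0 : K), Feasible b n π' ∧
      π'.card = π.card + 1 ∧ alloc π' k0 = alloc π k0 + 1 ∧
      ∀ k : K, k ≠ k0 → alloc π' k = alloc π k := by
  obtain ⟨_, ⟨σ, hσ, rfl⟩, hσlt⟩ := exists_lt_of_lt_csSup' hlt
  obtain ⟨π', k₀, hπ', hcard, halloc⟩ := hσ.exists_augment_of_card_lt hfeas hσlt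
  exact ⟨π', k₀, hπ', hcard, by simp [halloc], fun k hk => by simp [halloc, hk]⟩

/-- augmentation property: any feasible allocation that is not
maximum can be augmented by one job, increasing exactly one company's count. -/
theorem feasible_augment {J T K : Type*}
    [Fintype J] [Fintype T] [Fintype K] [Nonempty J] [Nonempty T] [Nonempty K]
    [DecidableEq J] [DecidableEq T] [DecidableEq K]
    (b : J → T → K → Prop) (n : K → T → ℕ) (π : Finset (J × T × K))
    (hfeas : Feasible b n π) (hlt : π.card < Zmax b n) :
    ∃ (π' : Finset (J × T × K)) (k0 : K), Feasible b n π' ∧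
      π'.card = π.card + 1 ∧ alloc π' k0 = alloc π k0 + 1 ∧
      ∀ k : K, k ≠ k0 → alloc π' k = alloc π k :=
  feasible_augment_general b n π hfeas hlt
end

section
/- Robin Hood transfer increases lexmin fairness (core of the proof of Lemma 5): let K be a finite type, v : K → ℕ, and i ≠ j companies with v i + 2 ≤ v j. Define v' by v' i = v i + 1, v' j = v j − 1, and v' k = v k for k ∉ {i,j}. Then Σ_k v' k = Σ_k v k, and the list of values of v sorted in nondecreasing order is strictly lexicographically smaller (with respect to List.Lex (<)) than the list of values of v' sorted in nondecreasing order. -/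
/-!
Write the values of `v` as the multiset `{v i, v j} + m` and those of `v'` as
`{v i + 1, v j - 1} + m`. Walking down the two sorted lists, their heads agree as long as they
come from `m`; the first head that does not is one of `v i + 1, v j - 1` on the right, and it
exceeds the head on the left, which is at most `v i`.
-/

def sortedList {K : Type*} [Fintype K] (v : K → ℕ) : List ℕ :=
  Multiset.sort (Finset.univ.val.map v) (· ≤ ·)

open Finset

theorem List.lex_lt_of_coe_eq_add {α : Type*} [LinearOrder α] {s t : List α}
    (hs : s.Pairwise (· ≤ ·)) (ht : t.Pairwise (· ≤ ·)) {A B m : Multiset α} {a : α}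
    (ha : a ∈ A) (hB : B ≠ 0) (haB : ∀ b ∈ B, a < b)
    (hsA : (s : Multiset α) = A + m) (htB : (t : Multiset α) = B + m) :
    List.Lex (· < ·) s t := by
  induction s generalizing t m with
  | nil => simp_all [eq_comm (a := (0 : Multiset α))]
  | cons x s ih =>
    obtain _ | ⟨y, t⟩ := t
    · simp_all [eq_comm (a := (0 : Multiset α))]
    have hmin : ∀ z ∈ A + m, x ≤ z := fun z hz =>
      hs.rel_head (l := x :: s) (by rwa [← Multiset.mem_coe, hsA])
    have hy : y ∈ B + m := htB ▸ List.mem_cons_self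
    rcases Multiset.mem_add.1 hy with hyB | hym
    · exact .rel ((hmin a (Multiset.mem_add.2 (.inl ha))).trans_lt (haB y hyB))
    have hxy : x ≤ y := hmin y (Multiset.mem_add.2 (.inr hym))
    rcases hxy.lt_or_eq with hlt | rfl
    · exact .rel hlt
    obtain ⟨m', rfl⟩ := Multiset.exists_cons_of_mem hym
    refine .cons (ih (m := m') hs.of_cons ht.of_cons ?_ ?_)
    · rw [Multiset.add_cons, ← Multiset.cons_coe] at hsA
      exact Multiset.cons_inj_right x |>.1 hsA
    · rw [Multiset.add_cons, ← Multiset.cons_coe] at htB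
      exact Multiset.cons_inj_right x |>.1 htB

theorem Finset.univ_val_map_eq_cons_cons {K β : Type*} [Fintype K] [DecidableEq K]
    (v : K → β) {i j : K} (hij : i ≠ j) :
    (univ : Finset K).val.map v = v i ::ₘ v j ::ₘ ((univ.erase i).erase j).val.map v := by
  have hj : j ∈ (univ : Finset K).val.erase i := (Multiset.mem_erase_of_ne hij.symm).2 (mem_univ j)
  rw [erase_val, erase_val, ← Multiset.map_cons, ← Multiset.map_cons, Multiset.cons_erase hj,
    Multiset.cons_erase (mem_univ i)]

/-- a Robin Hood transfer (moving one unit from a company `j` to a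
company `i` that has at least two fewer units) preserves the total sum and
strictly increases the sorted vector in the lexicographic order. -/
theorem robin_hood_transfer {K : Type*} [Fintype K] [DecidableEq K]
    (v v' : K → ℕ) (i j : K) (hij : i ≠ j) (hgap : v i + 2 ≤ v j)
    (hi : v' i = v i + 1) (hj : v' j = v j - 1)
    (hother : ∀ k : K, k ∉ ({i, j} : Set K) → v' k = v k) :
    (∑ k : K, v' k = ∑ k : K, v k) ∧
      List.Lex (· < ·) (sortedList v) (sortedList v') := by
  set R := (univ.erase i).erase j
  have hR : R.val.map v' = R.val.map v := Multiset.map_congr rfl fun k hk => by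
    obtain ⟨hkj, hk⟩ := mem_erase.1 hk
    exact hother k (by simp [(mem_erase.1 hk).1, hkj])
  have hv : univ.val.map v = {v i, v j} + R.val.map v := by
    rw [univ_val_map_eq_cons_cons v hij, Multiset.insert_eq_cons, Multiset.cons_add,
      Multiset.singleton_add]
  have hv' : univ.val.map v' = {v i + 1, v j - 1} + R.val.map v := by
    rw [univ_val_map_eq_cons_cons v' hij, hi, hj, hR, Multiset.insert_eq_cons, Multiset.cons_add,
      Multiset.singleton_add]
  refine ⟨?_, ?_⟩
  · simp only [sum_eq_multiset_sum, hv, hv', Multiset.sum_add, Multiset.insert_eq_cons,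
      Multiset.sum_cons, Multiset.sum_singleton]
    omega
  · refine List.lex_lt_of_coe_eq_add (Multiset.pairwise_sort _ _) (Multiset.pairwise_sort _ _)
      (Multiset.mem_cons_self _ _) Multiset.cons_ne_zero ?_ ((Multiset.sort_eq _ _).trans hv)
      ((Multiset.sort_eq _ _).trans hv')
    simp only [Multiset.mem_cons, Multiset.mem_singleton]
    omega
end

section
/- Fairness-improving exchange at the allocation level: let π and π' be feasible allocations with Z(π) = Z(π') = Z_max, and suppose there are companies i ≠ j with ω(π) i + 2 ≤ ω(π) j such that ω(π') i = ω(π) i + 1, ω(π') j = ω(π) j − 1, and ω(π') k = ω(π) k for all other companies k. Then π is not max-lexmin fair. -/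
open Finset

namespace List

variable {α : Type*} [LinearOrder α]

theorem count_cons_eq_zero_of_lt {x v : α} {l : List α} (hl : (x :: l).Pairwise (· ≤ ·))
    (hv : v < x) : (x :: l).count v = 0 := by
  refine count_eq_zero.mpr fun hmem => ?_
  rcases mem_cons.mp hmem with rfl | hmem
  · exact lt_irrefl v hv
  · exact (rel_of_pairwise_cons hl hmem).not_gt hv

/-- Two sorted lists of the same length first differ at the least value `c` whose multiplicities
differ; the list containing `c` more often has `c` at that position and is lexicographically
smaller. -/
theorem lex_lt_of_pairwise_le_of_count_lt (c : α) :
    ∀ {l l' : List α}, l.length = l'.length → l.Pairwise (· ≤ ·) → l'.Pairwise (· ≤ ·) →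
      (∀ u < c, l.count u = l'.count u) → l'.count c < l.count c → Lex (· < ·) l l'
  | [], [], _, _, _, _, hc => absurd hc (by simp)
  | x :: l, x' :: l', hlen, hl, hl', hu, hc => by
    rcases lt_trichotomy x x' with hlt | rfl | hgt
    · exact Lex.rel hlt
    · refine Lex.cons (lex_lt_of_pairwise_le_of_count_lt c (by simpa using hlen) hl.of_cons
        hl'.of_cons (fun u hu' => ?_) ?_)
      · have := hu u hu'
        rw [count_cons, count_cons] at this
        omega
      · rw [count_cons, count_cons] at hc
        omega
    · exfalso
      rcases lt_or_ge x' c with hx'c | hcx'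
      · have hpos : 0 < (x' :: l').count x' := count_pos_iff.mpr mem_cons_self
        have := hu x' hx'c
        rw [count_cons_eq_zero_of_lt hl hgt] at this
        omega
      · rw [count_cons_eq_zero_of_lt hl (hcx'.trans_lt hgt)] at hc
        omega

end List

section RobinHood

variable {K : Type*} [Fintype K]

theorem count_sort_map_univ (f : K → ℕ) (u : ℕ) :
    (Multiset.sort (univ.val.map f) (· ≤ ·)).count u = #{k | f k = u} := by
  rw [← Multiset.coe_count, Multiset.sort_eq, Multiset.count_map, Finset.card, Finset.filter_val]
  simp only [eq_comm]

/-- Moving one unit from a value `f j` to a value `f i ≤ f j - 2` makes the sorted value vector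
lexicographically larger: the multiplicity of `f i`, the least value affected, drops by one. -/
theorem lex_sort_map_of_transfer {f g : K → ℕ} {i j : K} (hgap : f i + 2 ≤ f j)
    (hi : g i = f i + 1) (hj : g j = f j - 1) (hother : ∀ k, k ≠ i → k ≠ j → g k = f k) :
    List.Lex (· < ·) (Multiset.sort (univ.val.map f) (· ≤ ·))
      (Multiset.sort (univ.val.map g) (· ≤ ·)) := by
  have hsame : ∀ k, g k ≤ f i ∨ f k < f i → f k = g k := by
    intro k hk
    by_cases hki : k = i
    · subst hki; omega
    by_cases hkj : k = j
    · subst hkj; omega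
    exact (hother k hki hkj).symm
  apply List.lex_lt_of_pairwise_le_of_count_lt (f i)
  · simp
  · exact Multiset.pairwise_sort _ _
  · exact Multiset.pairwise_sort _ _
  · intro u hu
    simp only [count_sort_map_univ]
    congr 1
    refine filter_congr fun k _ => ⟨fun hfk => ?_, fun hgk => ?_⟩
    · rwa [← hsame k (Or.inr (hfk ▸ hu))]
    · rwa [hsame k (Or.inl (hgk ▸ hu.le))]
  · simp only [count_sort_map_univ]
    refine card_lt_card ⟨fun k hk => ?_, fun hsub => ?_⟩
    · simp only [mem_filter, mem_univ, true_and] at hk ⊢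
      rw [hsame k (Or.inl hk.le), hk]
    · have := hsub (mem_filter.mpr ⟨mem_univ i, rfl⟩)
      simp only [mem_filter, mem_univ, true_and] at this
      omega

end RobinHood

theorem not_maxLexminFair_of_exchange_general {J T K : Type*}
    [Fintype K] [DecidableEq J] [DecidableEq T] [DecidableEq K]
    (b : J → T → K → Prop) (n : K → T → ℕ) (π π' : Finset (J × T × K))
    (hfeas' : Feasible b n π') (hmax' : π'.card = Zmax b n)
    (i j : K) (hgap : alloc π i + 2 ≤ alloc π j)
    (hi : alloc π' i = alloc π i + 1) (hj : alloc π' j = alloc π j - 1)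
    (hother : ∀ k : K, k ≠ i → k ≠ j → alloc π' k = alloc π k) :
    ¬ MaxLexminFair b n π := by
  intro hfair
  have hlex : List.Lex (· < ·) (sortedVec π) (sortedVec π') :=
    lex_sort_map_of_transfer hgap hi hj hother
  rcases hfair.2.2 π' hfeas' hmax' with heq | hlex'
  · exact asymm hlex (heq ▸ hlex)
  · exact asymm hlex hlex'

/-- fairness-improving exchange at the allocation level: if a
Robin-Hood transfer between two companies is realizable by another feasible
maximum allocation, then the original allocation is not max-lexmin fair. -/
theorem not_maxLexminFair_of_exchange {J T K : Type*}
    [Fintype J] [Fintype T] [Fintype K] [Nonempty J] [Nonempty T] [Nonempty K]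
    [DecidableEq J] [DecidableEq T] [DecidableEq K]
    (b : J → T → K → Prop) (n : K → T → ℕ) (π π' : Finset (J × T × K))
    (hfeas : Feasible b n π) (hfeas' : Feasible b n π')
    (hmax : π.card = Zmax b n) (hmax' : π'.card = Zmax b n)
    (i j : K) (hij : i ≠ j) (hgap : alloc π i + 2 ≤ alloc π j)
    (hi : alloc π' i = alloc π i + 1) (hj : alloc π' j = alloc π j - 1)
    (hother : ∀ k : K, k ≠ i → k ≠ j → alloc π' k = alloc π k) :
    ¬ MaxLexminFair b n π :=
  not_maxLexminFair_of_exchange_general b n π π' hfeas' hmax' i j hgap hi hj hother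
end

section
/- Extension to the dummy-augmented instance (the other direction of Lemma 6): every feasible allocation π of P with Z(π) = Z_max whose sorted vector equals φ_f extends to a feasible allocation π' of P' containing π such that π' assigns every dummy job of D, Z(π') = Z_max + |D|, and cost(π') = cost(π). -/
/-! ## The dummy-augmented instance `P'` of Section 3.2.

Given the max-lexmin fair sorted vector `φf = (φ_1 ≤ … ≤ φ_|K|)` of `P`,
we add `L = φ_|K| - φ_1` dummy layers; layer `l` (`0`-indexed) carries one
dummy time and `#{i : φ_i < φ_1 + l + 1}` dummy jobs of cost `0` that every
company bids on with capacity `1` per dummy time.  In `P'` each company may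
receive at most `φ_|K|` jobs in total. -/

/-- Number `L` of dummy layers: largest minus smallest entry of `φf`. -/
def Ldim (φf : List ℕ) : ℕ := φf.getLast! - φf.head!

/-- Number of dummy jobs in (0-indexed) layer `l`: the number of entries of
`φf` smaller than `φ_1 + (l + 1)`. -/
def layerSize (φf : List ℕ) (l : ℕ) : ℕ :=
  (φf.filter (fun x => x < φf.head! + l + 1)).length

/-- The finite type of dummy jobs: layer `l` carries `layerSize φf l` jobs. -/
abbrev Dummy (φf : List ℕ) : Type := (l : Fin (Ldim φf)) × Fin (layerSize φf l)

/-- Bids of `P'`: the original bids on real jobs at real times, plus a bid of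
every company on every dummy job of layer `l` at the dummy time of layer `l`. -/
def bidAug {J T K : Type*} (b : J → T → K → Prop) (φf : List ℕ) :
    (J ⊕ Dummy φf) → (T ⊕ Fin (Ldim φf)) → K → Prop
  | Sum.inl j, Sum.inl t, k => b j t k
  | Sum.inr d, Sum.inr l, _ => d.1 = l
  | _, _, _ => False

/-- Costs of `P'`: original costs on real triples, `0` on dummy triples. -/
def costAug {J T K : Type*} (c : J → T → K → ℕ) (φf : List ℕ) :
    (J ⊕ Dummy φf) → (T ⊕ Fin (Ldim φf)) → K → ℕ
  | Sum.inl j, Sum.inl t, k => c j t k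
  | _, _, _ => 0

/-- Capacities of `P'`: original capacities at real times, capacity `1` for
every company at every dummy time. -/
def capAug {T K : Type*} (n : K → T → ℕ) (φf : List ℕ) :
    K → (T ⊕ Fin (Ldim φf)) → ℕ :=
  fun k t => match t with
  | Sum.inl t => n k t
  | Sum.inr _ => 1

/-- Feasibility for `P'`: feasibility for the augmented bids and capacities,
together with the requirement that each company receives at most `φ_|K|`
(the largest entry of `φf`) jobs in total. -/
def FeasibleAug {J T K : Type*} [DecidableEq J] [DecidableEq T] [DecidableEq K]
    (b : J → T → K → Prop) (n : K → T → ℕ) (φf : List ℕ)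
    (π' : Finset ((J ⊕ Dummy φf) × (T ⊕ Fin (Ldim φf)) × K)) : Prop :=
  Feasible (bidAug b φf) (capAug n φf) π' ∧ ∀ k : K, alloc π' k ≤ φf.getLast!

/-- The maximum number of allocatable jobs in `P'`. -/
noncomputable def ZmaxAug {J T K : Type*} [DecidableEq J] [DecidableEq T] [DecidableEq K]
    (b : J → T → K → Prop) (n : K → T → ℕ) (φf : List ℕ) : ℕ :=
  sSup {z | ∃ π' : Finset ((J ⊕ Dummy φf) × (T ⊕ Fin (Ldim φf)) × K),
    FeasibleAug b n φf π' ∧ π'.card = z}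

/-- Real restriction of an allocation of `P'`: the triples whose job lies in
`J` (feasibility forces their time to lie in `T`), viewed in `J × T × K`. -/
def restrict {J T K D T' : Type*} [DecidableEq J] [DecidableEq T] [DecidableEq K]
    (π' : Finset ((J ⊕ D) × (T ⊕ T') × K)) : Finset (J × T × K) :=
  π'.filterMap
    (fun x => match x with
      | (Sum.inl j, Sum.inl t, k) => some (j, t, k)
      | _ => none)
    (by rintro ⟨j₁ | d₁, t₁ | l₁, k₁⟩ ⟨j₂ | d₂, t₂ | l₂, k₂⟩ x h₁ h₂ <;>
          simp_all <;> subst h₁ <;> simp_all)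

/-- The embedding of real triples into the triples of `P'`. -/
def embTriple {J T K D T' : Type*} (x : J × T × K) : (J ⊕ D) × (T ⊕ T') × K :=
  (Sum.inl x.1, Sum.inl x.2.1, x.2.2)

/-! Each company `k` of `π` receives `alloc π k ≥ φ_1` real jobs, and layer `l` (0-indexed) has
exactly one dummy job for each company with `alloc π k ≤ φ_1 + l`. Handing these jobs out
bijectively, layer by layer, gives company `k` one dummy job in each of the layers
`alloc π k - φ_1, …, L - 1`, that is `φ_|K| - alloc π k` of them, so it ends with exactly
`φ_|K|` jobs. Dummy jobs cost nothing and live at their own times, so nothing else changes. -/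

open Finset Function

namespace List

theorem Pairwise.rel_getLast! {α : Type*} [Inhabited α] {R : α → α → Prop} [Std.Refl R]
    {l : List α} {a : α} (hl : l.Pairwise R) (ha : a ∈ l) : R a l.getLast! := by
  rw [getLast!_of_getLast? (getLast?_eq_some_getLast (ne_nil_of_mem ha))]
  exact hl.rel_getLast ha

end List

theorem Fin.card_filter_le_val (n m : ℕ) : #{i : Fin n | m ≤ (i : ℕ)} = n - m := by
  have h := card_filter_add_card_filter_not (s := (univ : Finset (Fin n))) (fun i => (i : ℕ) < m)
  simp only [Fin.card_filter_val_lt, not_lt, card_univ, Fintype.card_fin] at h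
  omega

theorem Sigma.eq_of_fst_eq_of_embedding_eq {ι γ : Type*} {β : ι → Type*} (σ : ∀ i, β i ↪ γ)
    {d d' : Σ i, β i} (hfst : d.1 = d'.1) (hσ : σ d.1 d.2 = σ d'.1 d'.2) : d = d' := by
  obtain ⟨i, b⟩ := d
  obtain ⟨i', b'⟩ := d'
  obtain rfl : i = i' := hfst
  exact Sigma.ext rfl (heq_of_eq ((σ i).injective hσ))

section SortedVec

variable {J T K : Type*} [Fintype K] [DecidableEq K] (π : Finset (J × T × K))

theorem pairwise_sortedVec : (sortedVec π).Pairwise (· ≤ ·) :=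
  Multiset.pairwise_sort _ _

theorem alloc_mem_sortedVec (k : K) : alloc π k ∈ sortedVec π := by
  simp [sortedVec]

theorem head!_sortedVec_le_alloc (k : K) : (sortedVec π).head! ≤ alloc π k :=
  (pairwise_sortedVec π).head!_le (alloc_mem_sortedVec π k)

theorem alloc_le_getLast!_sortedVec (k : K) : alloc π k ≤ (sortedVec π).getLast! :=
  (pairwise_sortedVec π).rel_getLast! (alloc_mem_sortedVec π k)

theorem layerSize_sortedVec (l : ℕ) :
    layerSize (sortedVec π) l = #{k | alloc π k < (sortedVec π).head! + l + 1} := by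
  rw [layerSize, ← List.countP_eq_length_filter, ← Multiset.coe_countP, sortedVec,
    Multiset.sort_eq, Multiset.countP_map, card_def, filter_val]

/-- The dummy jobs of layer `l` given bijectively to the companies with `alloc π k ≤ φ_1 + l`. -/
noncomputable def layerAssignment (l : ℕ) : Fin (layerSize (sortedVec π) l) ↪ K :=
  (finCongr (layerSize_sortedVec π l)).toEmbedding.trans
    ((equivFin _).symm.toEmbedding.trans (Embedding.subtype _))

theorem alloc_layerAssignment_lt (l : ℕ) (i : Fin (layerSize (sortedVec π) l)) :
    alloc π (layerAssignment π l i) < (sortedVec π).head! + l + 1 :=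
  (mem_filter.1 ((equivFin _).symm (finCongr (layerSize_sortedVec π l) i)).2).2

theorem card_layers_layerAssignment_le (k : K) :
    #{l : Fin (Ldim (sortedVec π)) | ∃ i, layerAssignment π l i = k} ≤
      (sortedVec π).getLast! - alloc π k := by
  have hhead := head!_sortedVec_le_alloc π k
  have hlast := alloc_le_getLast!_sortedVec π k
  calc _ ≤ #{l : Fin (Ldim (sortedVec π)) | alloc π k - (sortedVec π).head! ≤ (l : ℕ)} := by
        refine card_le_card fun l hl => mem_filter.2 ⟨mem_univ l, ?_⟩
        obtain ⟨i, rfl⟩ := (mem_filter.1 hl).2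
        have := alloc_layerAssignment_lt π l i
        omega
    _ = _ := by
        rw [Fin.card_filter_le_val, Ldim]
        omega

end SortedVec

section Extension

variable {J T K : Type*} {φf : List ℕ}

theorem embTriple_injective {D T' : Type*} :
    Injective (embTriple : J × T × K → (J ⊕ D) × (T ⊕ T') × K) := by
  rintro ⟨j, t, k⟩ ⟨j', t', k'⟩ h
  simp_all [embTriple]

def dummyTriple (σ : ∀ l : Fin (Ldim φf), Fin (layerSize φf l) ↪ K) (d : Dummy φf) :
    (J ⊕ Dummy φf) × (T ⊕ Fin (Ldim φf)) × K :=
  (Sum.inr d, Sum.inr d.1, σ d.1 d.2)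

theorem dummyTriple_injective (σ : ∀ l : Fin (Ldim φf), Fin (layerSize φf l) ↪ K) :
    Injective (dummyTriple (J := J) (T := T) σ) :=
  fun _ _ h => Sum.inr_injective (congrArg Prod.fst h)

def dummyTriples (σ : ∀ l : Fin (Ldim φf), Fin (layerSize φf l) ↪ K) :
    Finset ((J ⊕ Dummy φf) × (T ⊕ Fin (Ldim φf)) × K) :=
  univ.map ⟨dummyTriple σ, dummyTriple_injective σ⟩

variable (σ : ∀ l : Fin (Ldim φf), Fin (layerSize φf l) ↪ K)

theorem card_filter_dummyTriples (p : (J ⊕ Dummy φf) × (T ⊕ Fin (Ldim φf)) × K → Prop)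
    [DecidablePred p] :
    #((dummyTriples (J := J) (T := T) σ).filter p) =
      #{d : Dummy φf | p (dummyTriple σ d)} := by
  rw [dummyTriples, filter_map, card_map]
  rfl

variable [DecidableEq J] [DecidableEq T] [DecidableEq K]

theorem card_filter_image_embTriple {D T' : Type*} [DecidableEq D] [DecidableEq T']
    (π : Finset (J × T × K)) (p : (J ⊕ D) × (T ⊕ T') × K → Prop) [DecidablePred p] :
    #((π.image embTriple).filter p) = #(π.filter fun x => p (embTriple x)) := by
  rw [filter_image, card_image_of_injective _ embTriple_injective]

theorem disjoint_image_embTriple_dummyTriples (π : Finset (J × T × K)) :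
    Disjoint (π.image embTriple) (dummyTriples σ) := by
  simp [disjoint_left, dummyTriples, dummyTriple, embTriple]

theorem card_filter_extension (π : Finset (J × T × K))
    (p : (J ⊕ Dummy φf) × (T ⊕ Fin (Ldim φf)) × K → Prop) [DecidablePred p] :
    #((π.image embTriple ∪ dummyTriples σ).filter p) =
      #(π.filter fun x => p (embTriple x)) +
        #{d : Dummy φf | p (dummyTriple σ d)} := by
  rw [filter_union, card_union_of_disjoint
    ((disjoint_image_embTriple_dummyTriples σ π).mono (filter_subset _ _) (filter_subset _ _)),
    card_filter_image_embTriple, card_filter_dummyTriples]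

theorem feasible_extension {b : J → T → K → Prop} {n : K → T → ℕ} {π : Finset (J × T × K)}
    (hπ : Feasible b n π) :
    Feasible (bidAug b φf) (capAug n φf) (π.image embTriple ∪ dummyTriples σ) := by
  refine ⟨?_, fun j => ?_, fun k t => ?_⟩
  · simp only [mem_union, mem_image, dummyTriples, mem_map]
    rintro _ (⟨x, hx, rfl⟩ | ⟨d, -, rfl⟩)
    · exact hπ.1 x hx
    · exact rfl
  · rw [card_filter_extension]
    cases j with
    | inl j => simpa [embTriple, dummyTriple] using hπ.2.1 j
    | inr d => simp [embTriple, dummyTriple, filter_eq']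
  · rw [card_filter_extension]
    cases t with
    | inl t => simpa [embTriple, dummyTriple, capAug] using hπ.2.2 k t
    | inr l =>
      simp only [embTriple, dummyTriple, capAug, reduceCtorEq, false_and, filter_false,
        card_empty, zero_add, Sum.inr.injEq]
      refine card_le_one.2 fun d hd d' hd' => ?_
      simp only [mem_filter] at hd hd'
      exact Sigma.eq_of_fst_eq_of_embedding_eq σ (hd.2.1.trans hd'.2.1.symm)
        (hd.2.2.trans hd'.2.2.symm)

theorem alloc_extension (π : Finset (J × T × K)) (k : K) :
    alloc (π.image embTriple ∪ dummyTriples σ) k = alloc π k + #{d : Dummy φf | σ d.1 d.2 = k} :=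
  card_filter_extension σ π _

theorem card_extension (π : Finset (J × T × K)) :
    #(π.image embTriple ∪ dummyTriples σ) = #π + Fintype.card (Dummy φf) := by
  rw [card_union_of_disjoint (disjoint_image_embTriple_dummyTriples σ π),
    card_image_of_injective _ embTriple_injective, dummyTriples, card_map, card_univ]

theorem cost_extension (c : J → T → K → ℕ) (π : Finset (J × T × K)) :
    cost (costAug c φf) (π.image embTriple ∪ dummyTriples σ) = cost c π := by
  rw [cost, sum_union (disjoint_image_embTriple_dummyTriples σ π),
    sum_image fun _ _ _ _ h => embTriple_injective h, dummyTriples, sum_map]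
  simp [cost, embTriple, dummyTriple, costAug]

theorem card_assigned_le_card_layers (k : K) :
    #{d : Dummy φf | σ d.1 d.2 = k} ≤ #{l : Fin (Ldim φf) | ∃ i, σ l i = k} :=
  card_le_card_of_injOn Sigma.fst (fun d hd => by simpa using ⟨d.2, (mem_filter.1 hd).2⟩)
    fun d hd d' hd' h => Sigma.eq_of_fst_eq_of_embedding_eq σ h
      ((mem_filter.1 hd).2.trans (mem_filter.1 hd').2.symm)

end Extension

theorem alloc_extension_layerAssignment_le {J T K : Type*} [Fintype K] [DecidableEq J]
    [DecidableEq T] [DecidableEq K] (π : Finset (J × T × K)) (k : K) :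
    alloc (π.image embTriple ∪ dummyTriples fun l => layerAssignment π l) k ≤
      (sortedVec π).getLast! := by
  rw [alloc_extension]
  have := (card_assigned_le_card_layers _ k).trans (card_layers_layerAssignment_le π k)
  have := alloc_le_getLast!_sortedVec π k
  omega

theorem extend_to_augmented_general {J T K : Type*}
    [Fintype K]
    [DecidableEq J] [DecidableEq T] [DecidableEq K]
    (b : J → T → K → Prop) (c : J → T → K → ℕ) (n : K → T → ℕ)
    (φf : List ℕ)
    (π : Finset (J × T × K)) (hfeas : Feasible b n π)
    (hmax : π.card = Zmax b n) (hsort : sortedVec π = φf) :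
    ∃ π' : Finset ((J ⊕ Dummy φf) × (T ⊕ Fin (Ldim φf)) × K),
      FeasibleAug b n φf π' ∧
      π.image (embTriple (D := Dummy φf) (T' := Fin (Ldim φf))) ⊆ π' ∧
      (∀ d : Dummy φf, ∃ x ∈ π', x.1 = Sum.inr d) ∧
      π'.card = Zmax b n + Fintype.card (Dummy φf) ∧
      cost (costAug c φf) π' = cost c π := by
  subst hsort
  let σ := fun l : Fin (Ldim (sortedVec π)) => layerAssignment π l
  refine ⟨π.image embTriple ∪ dummyTriples σ,
    ⟨feasible_extension σ hfeas, alloc_extension_layerAssignment_le π⟩, subset_union_left,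
    fun d => ⟨dummyTriple σ d, mem_union_right _ (mem_map_of_mem _ (mem_univ d)), rfl⟩, ?_,
    cost_extension σ c π⟩
  rw [card_extension, hmax]

/-- extension direction of Lemma 6: every feasible maximum
allocation of `P` whose sorted vector equals `φf` extends to a feasible
allocation of the dummy-augmented instance `P'` that contains it, assigns
every dummy job, allocates `Z_max + |D|` jobs, and has the same cost. -/
theorem extend_to_augmented {J T K : Type*}
    [Fintype J] [Fintype T] [Fintype K] [Nonempty J] [Nonempty T] [Nonempty K]
    [DecidableEq J] [DecidableEq T] [DecidableEq K]
    (b : J → T → K → Prop) (c : J → T → K → ℕ) (n : K → T → ℕ)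
    (φf : List ℕ) (hφf : ∃ π₀ : Finset (J × T × K),
      MaxLexminFair b n π₀ ∧ sortedVec π₀ = φf)
    (π : Finset (J × T × K)) (hfeas : Feasible b n π)
    (hmax : π.card = Zmax b n) (hsort : sortedVec π = φf) :
    ∃ π' : Finset ((J ⊕ Dummy φf) × (T ⊕ Fin (Ldim φf)) × K),
      FeasibleAug b n φf π' ∧
      π.image (embTriple (D := Dummy φf) (T' := Fin (Ldim φf))) ⊆ π' ∧
      (∀ d : Dummy φf, ∃ x ∈ π', x.1 = Sum.inr d) ∧
      π'.card = Zmax b n + Fintype.card (Dummy φf) ∧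
      cost (costAug c φf) π' = cost c π :=
  extend_to_augmented_general b c n φf π hfeas hmax hsort
end
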